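/- Let u = 1 + v where v ∈ L^2(S^N) has mean zero, and let q = 2N/(N-s) with 0 < s < N. For the functional Ψ(u) = ‖u‖_*² - S|u|_q² with ‖1‖_*² = S |S^N|^{2/q} and ⟨1, v⟩_* = 0, one has Ψ(1 + v) ≤ ‖v‖_*² - S |S^N|^{(2-q)/q} |v|_2² ≤ ‖v‖_*². -/

import Mathlib

open MeasureTheory Real

/-- The sharp fractional Sobolev constant `S(N,s)`. -/
noncomputable def sobolevConst (N : ℕ) (s : ℝ) : ℝ :=
  (2 : ℝ) ^ s * π ^ (s / 2) * (Real.Gamma (((N : ℝ) + s) / 2) / Real.Gamma (((N : ℝ) - s) / 2))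
    * (Real.Gamma ((N : ℝ) / 2) / Real.Gamma (N : ℝ)) ^ (s / (N : ℝ))

/-- The surface measure of the unit sphere `S^N ⊆ ℝ^{N+1}`. -/
noncomputable def sphereVol (N : ℕ) : ℝ :=
  2 * π ^ (((N : ℝ) + 1) / 2) / Real.Gamma (((N : ℝ) + 1) / 2)

lemma holder_const_one {α : Type*} [MeasurableSpace α] (μ : Measure α) [IsFiniteMeasure μ]
    (f : α → ℝ) (hf0 : ∀ x, 0 ≤ f x) (hf : Integrable f μ) {p : ℝ} (hp : 1 < p)
    (hfp : Integrable (fun x => f x ^ p) μ) :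
    ∫ x, f x ∂μ ≤ (∫ x, f x ^ p ∂μ) ^ (1/p) * ((μ Set.univ).toReal) ^ (1 - 1/p) := by
  have hpq : p.HolderConjugate (Real.conjExponent p) := Real.HolderConjugate.conjExponent hp
  set p' := Real.conjExponent p with hp'
  have hp0 : 0 < p := hpq.pos
  have key := ENNReal.lintegral_mul_le_Lp_mul_Lq μ hpq (g := fun _ => (1 : ENNReal))
    (hf.aemeasurable.ennreal_ofReal) aemeasurable_const
  simp only [Pi.mul_apply, mul_one, ENNReal.one_rpow, lintegral_const, one_mul] at key
  have h1 : ∫⁻ x, ENNReal.ofReal (f x) ∂μ = ENNReal.ofReal (∫ x, f x ∂μ) :=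
    (ofReal_integral_eq_lintegral_ofReal hf (ae_of_all _ hf0)).symm
  have h2 : ∫⁻ x, (ENNReal.ofReal (f x)) ^ p ∂μ = ENNReal.ofReal (∫ x, f x ^ p ∂μ) := by
    have he : ∀ x, (ENNReal.ofReal (f x)) ^ p = ENNReal.ofReal (f x ^ p) := fun x =>
      ENNReal.ofReal_rpow_of_nonneg (hf0 x) hp0.le
    simp_rw [he]
    exact (ofReal_integral_eq_lintegral_ofReal hfp
      (ae_of_all _ fun x => Real.rpow_nonneg (hf0 x) p)).symm
  rw [h1, h2] at key
  have hIp : 0 ≤ ∫ x, f x ^ p ∂μ :=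
    integral_nonneg fun x => Real.rpow_nonneg (hf0 x) p
  have h3 : (ENNReal.ofReal (∫ x, f x ^ p ∂μ)) ^ (1/p) * (μ Set.univ) ^ (1/p')
      = ENNReal.ofReal ((∫ x, f x ^ p ∂μ) ^ (1/p) * ((μ Set.univ).toReal) ^ (1/p')) := by
    rw [ENNReal.ofReal_mul (Real.rpow_nonneg hIp _),
      ENNReal.ofReal_rpow_of_nonneg hIp (by positivity),
      ← ENNReal.ofReal_rpow_of_nonneg ENNReal.toReal_nonneg (one_div_nonneg.2 hpq.symm.pos.le),
      ENNReal.ofReal_toReal (measure_ne_top μ _)]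
  rw [h3] at key
  have h4 : 1/p' = 1 - 1/p := by
    have := hpq.inv_add_inv_eq_one
    rw [one_div, one_div]
    linarith
  rw [h4] at key
  exact (ENNReal.ofReal_le_ofReal_iff
    (mul_nonneg (Real.rpow_nonneg hIp _) (Real.rpow_nonneg ENNReal.toReal_nonneg _))).1 key

theorem local_upper_bound_on_sphere (N : ℕ) (hN : 1 ≤ N) (s : ℝ) (hs0 : 0 < s) (hsN : s < N)
    (μ : Measure (Metric.sphere (0 : EuclideanSpace ℝ (Fin (N + 1))) 1))
    (hμ : μ Set.univ = ENNReal.ofReal (sphereVol N))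
    -- the bilinear form `⟨·,·⟩_*` induced by the operator `A_s`
    (Bs : ((Metric.sphere (0 : EuclideanSpace ℝ (Fin (N + 1))) 1) → ℝ) →ₗ[ℝ]
      ((Metric.sphere (0 : EuclideanSpace ℝ (Fin (N + 1))) 1) → ℝ) →ₗ[ℝ] ℝ)
    (hBsymm : ∀ f g, Bs f g = Bs g f)
    (v : (Metric.sphere (0 : EuclideanSpace ℝ (Fin (N + 1))) 1) → ℝ)
    (hv1 : Integrable v μ) (hv2 : Integrable (fun x => (v x) ^ 2) μ)
    (hvq : Integrable (fun x => |1 + v x| ^ (2 * (N : ℝ) / ((N : ℝ) - s))) μ)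
    (hmean : ∫ x, v x ∂μ = 0)
    (hnorm1 : Bs (fun _ => 1) (fun _ => 1)
      = sobolevConst N s * sphereVol N ^ (2 / (2 * (N : ℝ) / ((N : ℝ) - s))))
    (horth : Bs (fun _ => 1) v = 0) :
    Bs (fun x => 1 + v x) (fun x => 1 + v x)
        - sobolevConst N s
          * (∫ x, |1 + v x| ^ (2 * (N : ℝ) / ((N : ℝ) - s)) ∂μ)
              ^ (2 / (2 * (N : ℝ) / ((N : ℝ) - s)))
      ≤ Bs v v - sobolevConst N s
          * sphereVol N ^ ((2 - 2 * (N : ℝ) / ((N : ℝ) - s)) / (2 * (N : ℝ) / ((N : ℝ) - s)))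
          * ∫ x, (v x) ^ 2 ∂μ ∧
      Bs v v - sobolevConst N s
          * sphereVol N ^ ((2 - 2 * (N : ℝ) / ((N : ℝ) - s)) / (2 * (N : ℝ) / ((N : ℝ) - s)))
          * (∫ x, (v x) ^ 2 ∂μ)
        ≤ Bs v v := by
  have hNs : (0:ℝ) < (N:ℝ) - s := sub_pos.2 hsN
  have hNpos : (0:ℝ) < (N:ℝ) := hs0.trans hsN
  set q : ℝ := 2 * (N : ℝ) / ((N : ℝ) - s) with hqdef
  have hq0 : 0 < q := div_pos (by linarith) hNs
  have hq2 : 2 < q := by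
    rw [hqdef, lt_div_iff₀ hNs]; nlinarith
  -- positivity facts
  have hvol : 0 < sphereVol N := by
    unfold sphereVol
    exact div_pos (by positivity) (Real.Gamma_pos_of_pos (by positivity))
  have hS : 0 < sobolevConst N s := by
    unfold sobolevConst
    have h1 : 0 < Real.Gamma (((N:ℝ) + s) / 2) := Real.Gamma_pos_of_pos (by positivity)
    have h2 : 0 < Real.Gamma (((N:ℝ) - s) / 2) := Real.Gamma_pos_of_pos (half_pos hNs)
    have h3 : 0 < Real.Gamma ((N:ℝ) / 2) := Real.Gamma_pos_of_pos (half_pos hNpos)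
    have h4 : 0 < Real.Gamma (N:ℝ) := Real.Gamma_pos_of_pos hNpos
    exact mul_pos (mul_pos (mul_pos (by positivity) (by positivity)) (div_pos h1 h2))
      (Real.rpow_pos_of_pos (div_pos h3 h4) _)
  haveI : IsFiniteMeasure μ := ⟨by rw [hμ]; exact ENNReal.ofReal_lt_top⟩
  have hμvol : (μ Set.univ).toReal = sphereVol N := by
    rw [hμ, ENNReal.toReal_ofReal hvol.le]
  -- expand the bilinear form
  have hv1' : Bs v (fun _ => 1) = 0 := by rw [hBsymm]; exact horth
  have hfun : (fun x : (Metric.sphere (0 : EuclideanSpace ℝ (Fin (N + 1))) 1) => 1 + v x)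
      = (fun _ => (1:ℝ)) + v := rfl
  have hexp : Bs (fun x => 1 + v x) (fun x => 1 + v x)
      = Bs (fun _ => 1) (fun _ => 1) + Bs v v := by
    rw [hfun]
    simp [map_add, LinearMap.add_apply, horth, hv1']
  -- integral of the square
  have heq : (fun x : (Metric.sphere (0 : EuclideanSpace ℝ (Fin (N + 1))) 1)
      => (1 + v x)^2) = fun x => 1 + (2 * v x + v x ^ 2) := by funext x; ring
  have hf : Integrable (fun x => (1 + v x)^2) μ := by
    rw [heq]; exact (integrable_const 1).add ((hv1.const_mul 2).add hv2)
  have hfint : ∫ x, (1 + v x)^2 ∂μ = sphereVol N + ∫ x, (v x)^2 ∂μ := by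
    have hg : Integrable (fun x => 2 * v x + v x ^ 2) μ := (hv1.const_mul 2).add hv2
    have hcm : Integrable (fun x => 2 * v x) μ := hv1.const_mul 2
    rw [heq, integral_add (integrable_const 1) hg,
      integral_add hcm hv2, integral_const_mul, hmean, integral_const,
      smul_eq_mul, mul_one, measureReal_def, hμvol]
    ring
  -- Hölder step
  have habs : (fun x : (Metric.sphere (0 : EuclideanSpace ℝ (Fin (N + 1))) 1)
      => ((1 + v x)^2 : ℝ) ^ (q/2)) = fun x => |1 + v x| ^ q := by
    funext x
    rw [← sq_abs, ← Real.rpow_natCast |1 + v x| 2, ← Real.rpow_mul (abs_nonneg _)]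
    congr 1
    push_cast
    ring
  have hIntp : Integrable (fun x => ((1 + v x)^2 : ℝ) ^ (q/2)) μ := by
    rw [habs]; exact hvq
  have hH := holder_const_one μ (fun x => (1 + v x)^2) (fun x => sq_nonneg _) hf
    (by linarith : 1 < q/2) hIntp
  rw [habs, hfint, hμvol] at hH
  have hinv : 1 / (q/2) = 2/q := by field_simp
  have hinv2 : 1 - 2/q = (q-2)/q := by
    field_simp
  rw [hinv, hinv2] at hH
  set I : ℝ := ∫ x, |1 + v x| ^ q ∂μ with hIdef
  set V : ℝ := ∫ x, (v x)^2 ∂μ with hVdef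
  have hV0 : 0 ≤ V := integral_nonneg fun x => sq_nonneg _
  have hc : sphereVol N ^ ((q-2)/q) * sphereVol N ^ ((2-q)/q) = 1 := by
    rw [← Real.rpow_add hvol]
    have h0 : (q-2)/q + (2-q)/q = 0 := by ring
    rw [h0, Real.rpow_zero]
  have hc2 : sphereVol N ^ ((2-q)/q) * sphereVol N = sphereVol N ^ (2/q) := by
    nth_rewrite 2 [← Real.rpow_one (sphereVol N)]
    rw [← Real.rpow_add hvol]
    congr 1
    field_simp
    ring
  have key : sphereVol N ^ (2/q) + sphereVol N ^ ((2-q)/q) * V ≤ I ^ (2/q) := by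
    have hm := mul_le_mul_of_nonneg_left hH (Real.rpow_nonneg hvol.le ((2-q)/q))
    calc sphereVol N ^ (2/q) + sphereVol N ^ ((2-q)/q) * V
        = sphereVol N ^ ((2-q)/q) * (sphereVol N + V) := by rw [← hc2]; ring
      _ ≤ sphereVol N ^ ((2-q)/q) * (I ^ (2/q) * sphereVol N ^ ((q-2)/q)) := hm
      _ = I ^ (2/q) * (sphereVol N ^ ((q-2)/q) * sphereVol N ^ ((2-q)/q)) := by ring
      _ = I ^ (2/q) := by rw [hc, mul_one]
  have hSkey := mul_le_mul_of_nonneg_left key hS.le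
  have hnn : 0 ≤ sobolevConst N s * sphereVol N ^ ((2-q)/q) * V :=
    mul_nonneg (mul_nonneg hS.le (Real.rpow_nonneg hvol.le _)) hV0
  constructor
  · rw [hexp, hnorm1]
    nlinarith [hSkey]
  · linarith
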